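/- arXiv:1309.2886 — 5 statements merged into one kernel-verified Lean document; each statement's English description precedes it below -/
import Mathlib

section
/- Label the vertices of the complete graph K_7 by ZMod 7 and, for each j ∈ {1,2,3} and i ∈ ZMod 7, let e_{i,j} denote the oriented edge from vertex i to vertex i+j (so the edges with j = 1, 2, 3 form the oriented 0-star, 1-star and 2-star, respectively). For two edges with no common vertex define ε(a,b) = −1 if one of a,b has type 1 and the other has type 2, and ε(a,b) = 1 otherwise. Then for every oriented edge e = e_{a,j} and every vertex v ∈ ZMod 7 with v ∉ {a, a+j}, the sum of ε(e, e_{v,j'}) over all j' ∈ {1,2,3} for which the outgoing edge e_{v,j'} shares no vertex with e equals the sum of ε(e, e_{v−j',j'}) over all j' ∈ {1,2,3} for which the incoming edge e_{v−j',j'} shares no vertex with e. (This is the local balance identity which shows that the generalized Simon invariant of K_7, defined as Σ_{a∩b=∅} ε(a,b)ℓ(f(a),f(b)) over a projection of an embedding f, is invariant under the fifth Reidemeister move, equivalently that ε induces a homomorphism from the linking module L(K_7) to ℤ.) -/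
/-!
Rotating `K₇` by `-v` moves the vertex `v` to `0` and preserves edge types, so the identity
only depends on `d = a - v` and `j`: an edge at `0` is blocked exactly when its other endpoint
`j'` (outgoing) or `-j'` (incoming) lies on `{d, d + j}`. Writing every nonzero `x` as `±t` with
`t ∈ {1, 2, 3}` and putting `φ_j(±t) = ±ε(j, t)`, the two sides differ by `φ_j(d) + φ_j(d + j)`,
and `φ_j` changes sign at each step `x ↦ x + j` avoiding `0`.
-/

/-- The edge `e_{i,j}` of `K₇` joining vertex `i` to vertex `i + j`
(oriented from `i` to `i + j`), viewed as its set of endpoints. -/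
def K7edge (i : ZMod 7) (j : ℕ) : Finset (ZMod 7) := {i, i + (j : ZMod 7)}

/-- The epsilon coefficient of a pair of disjoint edges of `K₇`, depending only on
their types `j, j' ∈ {1,2,3}`: it is `-1` if one is of type 1 and the other of type 2,
and `1` otherwise. -/
def K7eps (j j' : ℕ) : ℤ :=
  if (j = 1 ∧ j' = 2) ∨ (j = 2 ∧ j' = 1) then -1 else 1

theorem disjoint_K7edge_iff (s : Finset (ZMod 7)) (i : ZMod 7) (j : ℕ) :
    Disjoint s (K7edge i j) ↔ i ∉ s ∧ i + (j : ZMod 7) ∉ s := by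
  simp [K7edge, Finset.disjoint_insert_right]

theorem add_mem_K7edge_iff (a v x : ZMod 7) (j : ℕ) :
    v + x ∈ K7edge a j ↔ x ∈ K7edge (a - v) j := by
  simp only [K7edge, Finset.mem_insert, Finset.mem_singleton, eq_sub_iff_add_eq',
    sub_add_eq_add_sub, add_comm v x]

theorem K7_local_balance_at_zero (d : ZMod 7) (j : ℕ) (hj : j ∈ ({1, 2, 3} : Finset ℕ))
    (hd : 0 ∉ K7edge d j) :
    (∑ j' ∈ ({1, 2, 3} : Finset ℕ),
        if (j' : ZMod 7) ∉ K7edge d j then K7eps j j' else 0) =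
    ∑ j' ∈ ({1, 2, 3} : Finset ℕ),
        if -(j' : ZMod 7) ∉ K7edge d j then K7eps j j' else 0 := by
  revert d
  fin_cases hj <;> decide

/-- Local balance identity for `K₇`: for every oriented edge `e = e_{a,j}` and every
vertex `v` not on `e`, the sum of the epsilon coefficients of `e` with the outgoing
edges at `v` disjoint from `e` equals the sum of the epsilon coefficients of `e` with
the incoming edges at `v` disjoint from `e`. -/
theorem K7_local_balance (a : ZMod 7) (j : ℕ) (hj : j ∈ ({1, 2, 3} : Finset ℕ))
    (v : ZMod 7) (hv₁ : v ≠ a) (hv₂ : v ≠ a + (j : ZMod 7)) :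
    (∑ j' ∈ ({1, 2, 3} : Finset ℕ),
        if Disjoint (K7edge a j) (K7edge v j') then K7eps j j' else 0) =
    (∑ j' ∈ ({1, 2, 3} : Finset ℕ),
        if Disjoint (K7edge a j) (K7edge (v - (j' : ZMod 7)) j') then K7eps j j' else 0) := by
  have hv : v ∉ K7edge a j := by simp [K7edge, hv₁, hv₂]
  have h0 : (0 : ZMod 7) ∉ K7edge (a - v) j := by rwa [← add_mem_K7edge_iff, add_zero]
  convert K7_local_balance_at_zero (a - v) j hj h0 using 3 with j' - j'
  · rw [disjoint_K7edge_iff, add_mem_K7edge_iff]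
    simp [hv]
  · rw [disjoint_K7edge_iff, sub_add_cancel, sub_eq_add_neg, add_mem_K7edge_iff]
    simp [hv]
end

section
/- For every odd natural number n (n ≥ 1), the binomial coefficient C(4n+3, 7) = (4n+3 choose 7), which counts the K_7 subgraphs of the complete graph K_{4n+3}, is an odd number. -/
/-!
By Lucas' theorem modulo 2, `C(2a+1, 2b+1) ≡ C(a, b)`, so stripping the low bit `k` times shows
that `C(n, 2^k - 1)` is odd whenever the last `k` binary digits of `n` are all `1`.
For odd `n` we have `4n + 3 ≡ 7 = 2^3 - 1 (mod 8)`.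
-/

namespace Nat

theorem choose_two_mul_add_one_modEq_two (a b : ℕ) :
    (2 * a + 1).choose (2 * b + 1) ≡ a.choose b [MOD 2] := by
  have : Fact (Nat.Prime 2) := ⟨Nat.prime_two⟩
  simpa [Nat.mul_add_mod, Nat.mul_add_div] using
    Choose.choose_modEq_choose_mod_mul_choose_div_nat (n := 2 * a + 1) (k := 2 * b + 1) (p := 2)

theorem odd_choose_two_pow_sub_one {n : ℕ} (k : ℕ) (h : n % 2 ^ k = 2 ^ k - 1) :
    Odd (n.choose (2 ^ k - 1)) := by
  induction k generalizing n with
  | zero => simp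
  | succ k ih =>
    have hpos : 0 < 2 ^ k := Nat.two_pow_pos k
    rw [pow_succ] at h ⊢
    have hhalf : n / 2 % 2 ^ k = 2 ^ k - 1 := by
      rw [← Nat.mod_mul_right_div_self, mul_comm, h]
      omega
    have hn : n = 2 * (n / 2) + 1 := by
      have := Nat.mod_mod_of_dvd n (dvd_mul_left 2 (2 ^ k))
      omega
    have hk : 2 ^ k * 2 - 1 = 2 * (2 ^ k - 1) + 1 := by omega
    rw [hn, hk, Nat.odd_iff, choose_two_mul_add_one_modEq_two, ← Nat.odd_iff]
    exact ih hhalf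

end Nat

theorem choose_four_n_add_three_seven_odd_general (n : ℕ) (hodd : Odd n) :
    Odd (Nat.choose (4 * n + 3) 7) := by
  obtain ⟨m, rfl⟩ := hodd
  exact Nat.odd_choose_two_pow_sub_one 3 (by omega)

/-- For every odd natural number `n ≥ 1`, the number `(4n+3).choose 7` of `K₇`
subgraphs of the complete graph `K_{4n+3}` is odd. -/
theorem choose_four_n_add_three_seven_odd (n : ℕ) (hn : 1 ≤ n) (hodd : Odd n) :
    Odd (Nat.choose (4 * n + 3) 7) :=
  choose_four_n_add_three_seven_odd_general n hodd
end

section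
/- Fix an integer N ≥ 2 and model the Möbius ladder M_{2N+1} on the vertex set ZMod (4N+2), with outer edges X_i = {i, i+1} and rungs Y_i = {i, i+2N+1}. For every c ∈ ZMod (4N+2), the rotation ρ_c : i ↦ i + c and the reflection τ : i ↦ −i, acting on edges elementwise, map outer edges to outer edges and rungs to rungs, and preserve the epsilon coefficients: ε(ρ_c(a), ρ_c(b)) = ε(a,b) and ε(τ(a), τ(b)) = ε(a,b) for all pairs of disjoint edges a, b. (This is the verification that the generalized Simon invariant of M_{2N+1} is independent of the choice of labeling, since every automorphism of M_{2N+1} acts on the outer cycle as a rotation or reflection.) -/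
/-- An edge of the Möbius ladder `M_{2N+1}` on the vertex set `ZMod (4N+2)`:
either an outer edge `X_i = {i, i+1}` or a rung `Y_i = {i, i + 2N + 1}`. -/
inductive MLEdge (N : ℕ) where
  | outer (i : ZMod (4 * N + 2))
  | rung (i : ZMod (4 * N + 2))

/-- The set of endpoints of an edge of `M_{2N+1}`. -/
def MLEdge.verts {N : ℕ} : MLEdge N → Finset (ZMod (4 * N + 2))
  | .outer i => {i, i + 1}
  | .rung i => {i, i + (2 * N + 1 : ℕ)}

/-- The cyclic distance between vertices of the `(4N+2)`-cycle. -/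
def MLcdist {N : ℕ} (u w : ZMod (4 * N + 2)) : ℕ := min (u - w).val (w - u).val

/-- The minimal outer edge distance `d(a,b)` between two edges of `M_{2N+1}`. -/
def MLEdge.dist {N : ℕ} (a b : MLEdge N) : ℕ :=
  (((a.verts ×ˢ b.verts).image fun p => MLcdist p.1 p.2).min).untopD 0

/-- The epsilon coefficient of a pair of edges of `M_{2N+1}` (with value `0` when the
edges share a vertex). -/
def MLeps {N : ℕ} (a b : MLEdge N) : ℤ :=
  if ¬ Disjoint a.verts b.verts then 0 else
  match a, b with
  | .outer _, .outer _ =>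
      if Odd (a.dist b) ∧ a.dist b ≠ 2 * N - 1 then 2
      else if a.dist b = 2 * N then -1 else 1
  | .outer _, .rung _ => if a.dist b = 1 then 2 else 3
  | .rung _, .outer _ => if a.dist b = 1 then 2 else 3
  | .rung _, .rung _ =>
      if a.dist b = 1 then 2 else if a.dist b = 2 then 5 else 6

/-- The rotation `i ↦ i + c` of the `(4N+2)`-cycle, acting on the edges of `M_{2N+1}`:
it maps outer edges to outer edges and rungs to rungs. -/
def MLrot {N : ℕ} (c : ZMod (4 * N + 2)) : MLEdge N → MLEdge N
  | .outer i => .outer (i + c)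
  | .rung i => .rung (i + c)

/-- The reflection `i ↦ -i` of the `(4N+2)`-cycle, acting on the edges of `M_{2N+1}`:
it maps outer edges to outer edges and rungs to rungs. -/
def MLrefl {N : ℕ} : MLEdge N → MLEdge N
  | .outer i => .outer (-i - 1)
  | .rung i => .rung (-i - (2 * N + 1 : ℕ))

/-!
Rotations and the reflection are isometries of the outer cycle, so they preserve the
minimal outer edge distance of every pair of edges; being bijections they preserve
disjointness, and they map outer edges to outer edges and rungs to rungs. Since `ε` only
depends on these three data, it is invariant.
-/

lemma MLcdist_add_right {N : ℕ} (u w c : ZMod (4 * N + 2)) :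
    MLcdist (u + c) (w + c) = MLcdist u w := by
  simp only [MLcdist, add_sub_add_right_eq_sub]

lemma MLcdist_neg {N : ℕ} (u w : ZMod (4 * N + 2)) : MLcdist (-u) (-w) = MLcdist u w := by
  rw [MLcdist, MLcdist, neg_sub_neg, neg_sub_neg, Nat.min_comm]

namespace MLEdge

variable {N : ℕ}

def isRung : MLEdge N → Bool
  | .outer _ => false
  | .rung _ => true

lemma verts_MLrot (c : ZMod (4 * N + 2)) (e : MLEdge N) :
    (MLrot c e).verts = e.verts.image (· + c) := by
  cases e <;> simp [MLrot, verts, add_right_comm]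

lemma verts_MLrefl (e : MLEdge N) : (MLrefl e).verts = e.verts.image (fun i => -i) := by
  cases e <;>
    rw [MLrefl, verts, verts, Finset.image_insert, Finset.image_singleton, Finset.pair_comm,
      sub_add_cancel, neg_add']

lemma dist_eq_of_verts_eq_image {f : ZMod (4 * N + 2) → ZMod (4 * N + 2)}
    (hf : ∀ u w, MLcdist (f u) (f w) = MLcdist u w) {a b a' b' : MLEdge N}
    (ha : a'.verts = a.verts.image f) (hb : b'.verts = b.verts.image f) :
    a'.dist b' = a.dist b := by
  have hcomp : (fun p => MLcdist p.1 p.2) ∘ Prod.map f f = fun p => MLcdist p.1 p.2 :=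
    funext fun p => hf p.1 p.2
  rw [dist, dist, ha, hb, ← Finset.prodMap_image_product, Finset.image_image, hcomp]

end MLEdge

open MLEdge

lemma MLeps_congr {N : ℕ} {a b a' b' : MLEdge N} (ha : a'.isRung = a.isRung)
    (hb : b'.isRung = b.isRung) (hdisj : Disjoint a'.verts b'.verts ↔ Disjoint a.verts b.verts)
    (hdist : a'.dist b' = a.dist b) : MLeps a' b' = MLeps a b := by
  cases a <;> cases b <;> cases a' <;> cases b' <;>
    simp only [isRung, Bool.false_eq_true, Bool.true_eq_false] at ha hb <;>
    simp only [MLeps, hdisj, hdist]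

lemma MLeps_eq_of_verts_eq_image {N : ℕ} {f : ZMod (4 * N + 2) → ZMod (4 * N + 2)}
    (hinj : Function.Injective f) (hf : ∀ u w, MLcdist (f u) (f w) = MLcdist u w)
    {φ : MLEdge N → MLEdge N} (hkind : ∀ e, (φ e).isRung = e.isRung)
    (hverts : ∀ e, (φ e).verts = e.verts.image f) (a b : MLEdge N) :
    MLeps (φ a) (φ b) = MLeps a b :=
  MLeps_congr (hkind a) (hkind b)
    (by rw [hverts, hverts, Finset.disjoint_image hinj])
    (dist_eq_of_verts_eq_image hf (hverts a) (hverts b))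

theorem MobiusLadder_eps_symmetry_general (N : ℕ) (c : ZMod (4 * N + 2)) :
    (∀ e : MLEdge N, (MLrot c e).verts = e.verts.image (· + c)) ∧
    (∀ e : MLEdge N, (MLrefl e).verts = e.verts.image (fun i => -i)) ∧
    (∀ a b : MLEdge N, Disjoint a.verts b.verts →
      MLeps (MLrot c a) (MLrot c b) = MLeps a b) ∧
    (∀ a b : MLEdge N, Disjoint a.verts b.verts →
      MLeps (MLrefl a) (MLrefl b) = MLeps a b) :=
  ⟨verts_MLrot c, verts_MLrefl,
    fun a b _ => MLeps_eq_of_verts_eq_image (add_left_injective c)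
      (fun u w => MLcdist_add_right u w c) (by rintro (_ | _) <;> rfl) (verts_MLrot c) a b,
    fun a b _ => MLeps_eq_of_verts_eq_image neg_injective
      MLcdist_neg (by rintro (_ | _) <;> rfl) verts_MLrefl a b⟩

/-- For `N ≥ 2`, the rotations and the reflection of the outer cycle of `M_{2N+1}` act
on edges elementwise (mapping outer edges to outer edges and rungs to rungs) and
preserve the epsilon coefficients of all pairs of disjoint edges.  Hence the
generalized Simon invariant of `M_{2N+1}` is independent of the labeling. -/
theorem MobiusLadder_eps_symmetry (N : ℕ) (hN : 2 ≤ N) (c : ZMod (4 * N + 2)) :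
    (∀ e : MLEdge N, (MLrot c e).verts = e.verts.image (· + c)) ∧
    (∀ e : MLEdge N, (MLrefl e).verts = e.verts.image (fun i => -i)) ∧
    (∀ a b : MLEdge N, Disjoint a.verts b.verts →
      MLeps (MLrot c a) (MLrot c b) = MLeps a b) ∧
    (∀ a b : MLEdge N, Disjoint a.verts b.verts →
      MLeps (MLrefl a) (MLrefl b) = MLeps a b) :=
  MobiusLadder_eps_symmetry_general N c
end

section
/- In the quotient module L(K_{3,3}) = Z(K_{3,3})/B(K_{3,3}), the classes of the generators satisfy [g1] = [g2] = [g3] = [g4] = [g5] = [g6] = [g7] = [g8] = [g9] = [g10] = [g12] = [g15] = [g16] = [g17] = [g18] and [g11] = [g13] = [g14] = −[g1]. -/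
namespace K33LinkingModule

/-- The generators `g₁, …, g₁₈` of the free ℤ-module `Z(K_{3,3})` (0-indexed):
`g q` is the `q`-th standard basis vector of `Fin 18 → ℤ`. -/
def g (q : Fin 18) : Fin 18 → ℤ := Pi.single q 1

/-- The 36 relators generating the submodule `B(K_{3,3}) ≤ Z(K_{3,3})`
(Taniyama's relations `δ(V^{e,v})` for `K_{3,3}`, written in the generators `g`,
0-indexed). -/
def relList : List (Fin 18 → ℤ) :=
  [g 9 - g 5, g 0 - g 8, g 6 - g 3,
   g 4 + g 10, g 12 + g 17, g 15 - g 14,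
   -g 13 - g 0, g 1 - g 6, g 7 - g 4,
   g 5 - g 14, -g 16 - g 12, g 9 - g 15,
   g 11 - g 1, g 2 - g 7, g 8 - g 5,
   g 0 + g 12, g 13 + g 16, g 17 - g 9,
   -g 10 - g 2, g 3 - g 8, g 6 - g 0,
   g 1 - g 9, -g 15 - g 13, g 11 - g 17,
   g 14 - g 3, g 4 - g 6, g 7 - g 1,
   g 2 + g 13, g 10 + g 15, g 16 - g 11,
   -g 12 - g 4, g 5 - g 7, g 8 - g 2,
   g 3 - g 11, -g 17 - g 10, g 14 - g 16]

/-- The submodule `B(K_{3,3})` of `Z(K_{3,3}) = (Fin 18 → ℤ)` spanned by the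
36 relators. -/
def B : Submodule ℤ (Fin 18 → ℤ) := Submodule.span ℤ {x | x ∈ relList}

/-- The linking module `L(K_{3,3}) = Z(K_{3,3}) / B(K_{3,3})`. -/
abbrev L := (Fin 18 → ℤ) ⧸ B

end K33LinkingModule

namespace Submodule.Quotient

variable {R M : Type*} [Ring R] [AddCommGroup M] [Module R M] {s : Set M} {a b : M}

theorem mk_eq_of_sub_mem (h : a - b ∈ s) : (mk a : M ⧸ span R s) = mk b :=
  (Submodule.Quotient.eq _).2 (subset_span h)

theorem mk_eq_neg_of_neg_sub_mem (h : -a - b ∈ s) : (mk a : M ⧸ span R s) = -mk b := by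
  rw [← neg_eq_iff_eq_neg, ← mk_neg]
  exact mk_eq_of_sub_mem h

end Submodule.Quotient

namespace K33LinkingModule

open Submodule.Quotient

/-- In `L(K_{3,3})`, the classes of the generators satisfy
`[g₁] = ⋯ = [g₁₀] = [g₁₂] = [g₁₅] = [g₁₆] = [g₁₇] = [g₁₈]` and
`[g₁₁] = [g₁₃] = [g₁₄] = -[g₁]` (indices 1-based; here 0-indexed). -/
theorem classes_of_generators :
    (∀ q ∈ ({0, 1, 2, 3, 4, 5, 6, 7, 8, 9, 11, 14, 15, 16, 17} : Finset (Fin 18)),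
      (Submodule.Quotient.mk (g q) : L) = Submodule.Quotient.mk (g 0)) ∧
    (∀ q ∈ ({10, 12, 13} : Finset (Fin 18)),
      (Submodule.Quotient.mk (g q) : L) = -Submodule.Quotient.mk (g 0)) := by
  -- Seventeen relators forming a spanning tree, each oriented towards `g 0`, so that rewriting
  -- with them takes every class to `±mk (g 0)`.
  have h1 : (mk (g 1) : L) = mk (g 6) := mk_eq_of_sub_mem (by simp [relList])
  have h2 : (mk (g 2) : L) = mk (g 7) := mk_eq_of_sub_mem (by simp [relList])
  have h3 : (mk (g 3) : L) = mk (g 8) := mk_eq_of_sub_mem (by simp [relList])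
  have h4 : (mk (g 4) : L) = mk (g 6) := mk_eq_of_sub_mem (by simp [relList])
  have h5 : (mk (g 5) : L) = mk (g 7) := mk_eq_of_sub_mem (by simp [relList])
  have h6 : (mk (g 6) : L) = mk (g 0) := mk_eq_of_sub_mem (by simp [relList])
  have h7 : (mk (g 7) : L) = mk (g 1) := mk_eq_of_sub_mem (by simp [relList])
  have h8 : (mk (g 8) : L) = mk (g 2) := mk_eq_of_sub_mem (by simp [relList])
  have h9 : (mk (g 9) : L) = mk (g 5) := mk_eq_of_sub_mem (by simp [relList])
  have h10 : (mk (g 10) : L) = -mk (g 2) := mk_eq_neg_of_neg_sub_mem (by simp [relList])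
  have h11 : (mk (g 11) : L) = mk (g 1) := mk_eq_of_sub_mem (by simp [relList])
  have h12 : (mk (g 12) : L) = -mk (g 4) := mk_eq_neg_of_neg_sub_mem (by simp [relList])
  have h13 : (mk (g 13) : L) = -mk (g 0) := mk_eq_neg_of_neg_sub_mem (by simp [relList])
  have h14 : (mk (g 14) : L) = mk (g 3) := mk_eq_of_sub_mem (by simp [relList])
  have h15 : (mk (g 15) : L) = mk (g 9) := (mk_eq_of_sub_mem (by simp [relList])).symm
  have h16 : (mk (g 16) : L) = mk (g 11) := mk_eq_of_sub_mem (by simp [relList])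
  have h17 : (mk (g 17) : L) = mk (g 9) := mk_eq_of_sub_mem (by simp [relList])
  constructor <;> intro q hq <;> fin_cases hq <;>
    simp only [h1, h2, h3, h4, h5, h6, h7, h8, h9, h10, h11, h12, h13, h14, h15, h16, h17]

end K33LinkingModule
end

section
/- The quotient module L(K_{3,3}) = Z(K_{3,3})/B(K_{3,3}) is a free ℤ-module of rank one generated by the class [g1] of E^{c1,c3}; in particular there is a ℤ-module isomorphism L(K_{3,3}) ≅ ℤ sending [g1] to 1. -/
namespace K33LinkingModule

/-!
The signs `sign q` are chosen so that the functional `x ↦ ∑ q, sign q * x q` kills all 36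
relators, so `B` lies in its kernel. Conversely, each relator `±g a ± g b` identifies
`[g a]` with `±[g b]`, and the graph with these edges is connected (a spanning tree is used
below), so every class `[g q]` equals `sign q • [g 0]`. Hence `B` is exactly the kernel, and
`L = Z / ker ≅ ℤ` with `[g 0] ↦ 1`.
-/

section QuotientOfPi

variable {R ι : Type*} [Ring R] [Fintype ι] [DecidableEq ι]
  {N : Submodule R (ι → R)} {s : ι → R} {x₀ : ι → R}

theorem mkQ_eq_linearCombination_smul
    (hgen : ∀ i, N.mkQ (Pi.single i 1) = s i • N.mkQ x₀) (x : ι → R) :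
    N.mkQ x = Fintype.linearCombination R s x • N.mkQ x₀ := by
  have hmaps : N.mkQ = LinearMap.toSpanSingleton R _ (N.mkQ x₀) ∘ₗ
      Fintype.linearCombination R s := by
    refine LinearMap.pi_ext' fun i => LinearMap.ext_ring ?_
    simpa using hgen i
  exact LinearMap.congr_fun hmaps x

theorem ker_linearCombination_eq (hN : N ≤ LinearMap.ker (Fintype.linearCombination R s))
    (hgen : ∀ i, N.mkQ (Pi.single i 1) = s i • N.mkQ x₀) :
    LinearMap.ker (Fintype.linearCombination R s) = N := by
  refine le_antisymm (fun x hx => ?_) hN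
  rw [← Submodule.Quotient.mk_eq_zero, ← N.mkQ_apply, mkQ_eq_linearCombination_smul hgen,
    LinearMap.mem_ker.mp hx, zero_smul]

theorem exists_quotient_linearEquiv_self
    (hN : N ≤ LinearMap.ker (Fintype.linearCombination R s))
    (hgen : ∀ i, N.mkQ (Pi.single i 1) = s i • N.mkQ x₀)
    (hx₀ : Fintype.linearCombination R s x₀ = 1) :
    ∃ e : ((ι → R) ⧸ N) ≃ₗ[R] R, e (N.mkQ x₀) = 1 := by
  have hsurj : Function.Surjective (Fintype.linearCombination R s) := fun r =>
    ⟨r • x₀, by rw [map_smul, hx₀, smul_eq_mul, mul_one]⟩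
  refine ⟨(Submodule.quotEquivOfEq _ _ (ker_linearCombination_eq hN hgen).symm).trans
    ((Fintype.linearCombination R s).quotKerEquivOfSurjective hsurj), ?_⟩
  simpa using hx₀

end QuotientOfPi

def sign : Fin 18 → ℤ := ![1, 1, 1, 1, 1, 1, 1, 1, 1, 1, -1, 1, -1, -1, 1, 1, 1, 1]

theorem B_le_ker_linearCombination_sign :
    B ≤ LinearMap.ker (Fintype.linearCombination ℤ sign) := by
  rw [B, Submodule.span_le]
  intro x (hx : x ∈ relList)
  fin_cases hx <;> simp [g, sign]

local notation "mk" => (Submodule.Quotient.mk : (Fin 18 → ℤ) → L)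

theorem mk_g_eq_of_sub_mem (a b : Fin 18) (h : g a - g b ∈ relList := by simp [relList]) :
    mk (g a) = mk (g b) :=
  (Submodule.Quotient.eq B).mpr (Submodule.subset_span h)

theorem mk_g_eq_neg_of_add_mem (a b : Fin 18) (h : g a + g b ∈ relList := by simp [relList]) :
    mk (g a) = -mk (g b) := by
  rw [← Submodule.Quotient.mk_neg, Submodule.Quotient.eq, sub_neg_eq_add]
  exact Submodule.subset_span h

theorem mk_g_eq_neg_of_neg_sub_mem (a b : Fin 18)
    (h : -g a - g b ∈ relList := by simp [relList]) :
    mk (g a) = -mk (g b) := by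
  rw [← Submodule.Quotient.mk_neg, Submodule.Quotient.eq, sub_neg_eq_add, ← B.neg_mem_iff,
    neg_add']
  exact Submodule.subset_span h

theorem mk_g_eq_sign_smul (q : Fin 18) : mk (g q) = sign q • mk (g 0) := by
  have h8 : mk (g 8) = mk (g 0) := (mk_g_eq_of_sub_mem 0 8).symm
  have h5 : mk (g 5) = mk (g 0) := (mk_g_eq_of_sub_mem 8 5).symm.trans h8
  have h9 : mk (g 9) = mk (g 0) := (mk_g_eq_of_sub_mem 9 5).trans h5
  have h6 : mk (g 6) = mk (g 0) := mk_g_eq_of_sub_mem 6 0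
  have h3 : mk (g 3) = mk (g 0) := (mk_g_eq_of_sub_mem 6 3).symm.trans h6
  have h1 : mk (g 1) = mk (g 0) := (mk_g_eq_of_sub_mem 1 6).trans h6
  have h7 : mk (g 7) = mk (g 0) := (mk_g_eq_of_sub_mem 7 1).trans h1
  have h2 : mk (g 2) = mk (g 0) := (mk_g_eq_of_sub_mem 2 7).trans h7
  have h11 : mk (g 11) = mk (g 0) := (mk_g_eq_of_sub_mem 11 1).trans h1
  have h4 : mk (g 4) = mk (g 0) := (mk_g_eq_of_sub_mem 4 6).trans h6
  have h14 : mk (g 14) = mk (g 0) := (mk_g_eq_of_sub_mem 14 3).trans h3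
  have h15 : mk (g 15) = mk (g 0) := (mk_g_eq_of_sub_mem 15 14).trans h14
  have h17 : mk (g 17) = mk (g 0) := (mk_g_eq_of_sub_mem 17 9).trans h9
  have h16 : mk (g 16) = mk (g 0) := (mk_g_eq_of_sub_mem 16 11).trans h11
  have h13 : mk (g 13) = -mk (g 0) := mk_g_eq_neg_of_neg_sub_mem 13 0
  have h12 : mk (g 12) = -mk (g 0) := by rw [mk_g_eq_neg_of_add_mem 0 12, neg_neg]
  have h10 : mk (g 10) = -mk (g 0) := by rw [mk_g_eq_neg_of_neg_sub_mem 10 2, h2]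
  fin_cases q <;> simp [sign, *]

/-- The linking module `L(K_{3,3}) = Z(K_{3,3}) / B(K_{3,3})` is a free ℤ-module of
rank one generated by the class `[g₁]` of `E^{c₁,c₃}`: there is a ℤ-module
isomorphism `L(K_{3,3}) ≃ ℤ` sending `[g₁]` to `1`. -/
theorem linking_module_iso_int :
    ∃ e : L ≃ₗ[ℤ] ℤ, e (Submodule.Quotient.mk (g 0)) = 1 :=
  exists_quotient_linearEquiv_self B_le_ker_linearCombination_sign mk_g_eq_sign_smul
    (by simp [g, sign])

end K33LinkingModule
end
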